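/- arXiv:2403.01620 — 2 statements merged into one kernel-verified Lean document; each statement's English description precedes it below -/
import Mathlib

section
/- Let φ ∈ P_sym and ψ = φ^c its c-transform, and suppose n ∈ ∂^cφ(m), i.e., φ(m) + ψ(n) = ⟨m,n⟩. Write m = Σ α_k m_k and n = Σ β_l n_l with Σα = Σβ = 1, min α = min β = 0. If α_l > α_j for some indices j ≠ l, then β_l ≥ β_j. -/
open Set

noncomputable section

/-- Vertices of the standard symmetric simplex `Δ ⊂ M_ℝ`. -/
def mVert (d : ℕ) (i : Fin (d + 2)) : Fin (d + 2) → ℝ :=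
  fun j => (d + 2 : ℝ) * (if j = i then 1 else 0) - 1

/-- Vertices of the polar simplex `Δ∨ ⊂ N_ℝ`, normalized so that
`⟨mᵢ, nⱼ⟩ = (d+2)δᵢⱼ - 1`. -/
def nVert (d : ℕ) (i : Fin (d + 2)) : Fin (d + 2) → ℝ :=
  fun j => (if j = i then 1 else 0) - 1 / (d + 2 : ℝ)

/-- `A = ∂Δ`. -/
def bdryA (d : ℕ) : Set (Fin (d + 2) → ℝ) :=
  frontier (convexHull ℝ (Set.range (mVert d)))

/-- `B = ∂Δ∨`. -/
def bdryB (d : ℕ) : Set (Fin (d + 2) → ℝ) :=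
  frontier (convexHull ℝ (Set.range (nVert d)))

/-- The pairing between `M_ℝ` and `N_ℝ`. -/
def pairMN (d : ℕ) (x y : Fin (d + 2) → ℝ) : ℝ := ∑ i, x i * y i

/-- c-transform of a function on `A`, giving a function on `B`. -/
def cTA (d : ℕ) (φ : (Fin (d + 2) → ℝ) → ℝ) (y : Fin (d + 2) → ℝ) : ℝ :=
  ⨆ x : bdryA d, (pairMN d x y - φ x)

/-- c-transform of a function on `B`, giving a function on `A`. -/
def cTB (d : ℕ) (ψ : (Fin (d + 2) → ℝ) → ℝ) (x : Fin (d + 2) → ℝ) : ℝ :=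
  ⨆ y : bdryB d, (pairMN d x y - ψ y)

/-- Precomposition by a permutation, as a homeomorphism. -/
def permHomeo (d : ℕ) (g : Equiv.Perm (Fin (d + 2))) :
    (Fin (d + 2) → ℝ) ≃ₜ (Fin (d + 2) → ℝ) where
  toFun x := x ∘ g
  invFun x := x ∘ g.symm
  left_inv x := by ext i; simp
  right_inv x := by ext i; simp
  continuous_toFun := continuous_pi fun i => continuous_apply (g i)
  continuous_invFun := continuous_pi fun i => continuous_apply (g.symm i)

lemma permHomeo_linear (d : ℕ) (g : Equiv.Perm (Fin (d + 2))) :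
    IsLinearMap ℝ (permHomeo d g) :=
  ⟨fun x y => rfl, fun c x => rfl⟩

lemma mVert_comp (d : ℕ) (g : Equiv.Perm (Fin (d + 2))) (k : Fin (d + 2)) :
    mVert d k ∘ g = mVert d (g.symm k) := by
  ext i
  simp [mVert, Function.comp, Equiv.apply_eq_iff_eq_symm_apply]

lemma image_hullA (d : ℕ) (g : Equiv.Perm (Fin (d + 2))) :
    (permHomeo d g) '' (convexHull ℝ (Set.range (mVert d)))
      = convexHull ℝ (Set.range (mVert d)) := by
  rw [(permHomeo_linear d g).image_convexHull]
  congr 1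
  ext x
  constructor
  · rintro ⟨-, ⟨k, rfl⟩, rfl⟩
    exact ⟨g.symm k, (mVert_comp d g k).symm⟩
  · rintro ⟨k, rfl⟩
    refine ⟨mVert d (g k), ⟨g k, rfl⟩, ?_⟩
    show mVert d (g k) ∘ ⇑g = mVert d k
    rw [mVert_comp]; simp

lemma comp_mem_bdryA (d : ℕ) (g : Equiv.Perm (Fin (d + 2)))
    {x : Fin (d + 2) → ℝ} (hx : x ∈ bdryA d) : x ∘ g ∈ bdryA d := by
  have h1 : (permHomeo d g) '' (bdryA d) = bdryA d := by
    unfold bdryA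
    rw [(permHomeo d g).image_frontier, image_hullA]
  have : (permHomeo d g) x ∈ bdryA d := by
    rw [← h1]; exact Set.mem_image_of_mem _ hx
  exact this

lemma bdryA_compact (d : ℕ) : IsCompact (bdryA d) := by
  have hK : IsCompact (convexHull ℝ (Set.range (mVert d))) :=
    (Set.finite_range (mVert d)).isCompact_convexHull (𝕜 := ℝ)
  exact hK.of_isClosed_subset isClosed_frontier
    (hK.isClosed.frontier_subset)

/-- If `φ ∈ P_sym`, `n ∈ ∂^cφ(m)`, and the barycentric-type coordinates satisfy
`α_j < α_l`, then `β_j ≤ β_l`. -/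
theorem cSubgradient_monotone_coordinates (d : ℕ)
    (φ : (Fin (d + 2) → ℝ) → ℝ)
    (hcont : ContinuousOn φ (bdryA d))
    (hsym : ∀ g : Equiv.Perm (Fin (d + 2)), ∀ x ∈ bdryA d, φ (x ∘ g) = φ x)
    (hcc : ∀ x ∈ bdryA d, cTB d (cTA d φ) x = φ x)
    (m n : Fin (d + 2) → ℝ) (hm : m ∈ bdryA d) (hn : n ∈ bdryB d)
    (hsub : φ m + cTA d φ n = pairMN d m n)
    (α β : Fin (d + 2) → ℝ)
    (hmα : m = ∑ k, α k • mVert d k) (hα1 : ∑ k, α k = 1)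
    (hα0 : ∀ k, 0 ≤ α k) (hαmin : ∃ k, α k = 0)
    (hnβ : n = ∑ k, β k • nVert d k) (hβ1 : ∑ k, β k = 1)
    (hβ0 : ∀ k, 0 ≤ β k) (hβmin : ∃ k, β k = 0)
    (j l : Fin (d + 2)) (hjl : j ≠ l) (hα : α j < α l) :
    β j ≤ β l := by
  classical
  set g : Equiv.Perm (Fin (d + 2)) := Equiv.swap j l with hg
  have hmem : m ∘ g ∈ bdryA d := comp_mem_bdryA d g hm
  -- coordinates of m and n
  have hd2 : (0 : ℝ) < (d : ℝ) + 2 := by positivity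
  have hmval : ∀ i, m i = ((d : ℝ) + 2) * α i - 1 := by
    intro i
    rw [hmα]
    simp only [Finset.sum_apply, Pi.smul_apply, mVert, smul_eq_mul]
    rw [show (∑ k, α k * ((d + 2 : ℝ) * (if i = k then 1 else 0) - 1))
        = ((d : ℝ) + 2) * (∑ k, α k * (if i = k then 1 else 0)) - ∑ k, α k by
      rw [Finset.mul_sum, ← Finset.sum_sub_distrib]; congr 1; ext k; push_cast; ring]
    rw [hα1]
    simp [mul_ite, mul_one, mul_zero, Finset.sum_ite_eq]
  have hnval : ∀ i, n i = β i - 1 / ((d : ℝ) + 2) := by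
    intro i
    rw [hnβ]
    simp only [Finset.sum_apply, Pi.smul_apply, nVert, smul_eq_mul]
    rw [show (∑ k, β k * ((if i = k then 1 else 0) - 1 / (d + 2 : ℝ)))
        = (∑ k, β k * (if i = k then 1 else 0)) - (∑ k, β k) * (1 / ((d : ℝ) + 2)) by
      rw [Finset.sum_mul, ← Finset.sum_sub_distrib]; congr 1; ext k; push_cast; ring]
    rw [hβ1]
    simp [mul_ite, mul_one, mul_zero, Finset.sum_ite_eq, one_div]
  -- the sup is bounded above
  have hbdd : BddAbove (Set.range fun x : bdryA d => pairMN d x n - φ x) := by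
    have hcont' : ContinuousOn (fun x => pairMN d x n - φ x) (bdryA d) := by
      apply ContinuousOn.sub _ hcont
      apply continuousOn_finset_sum
      intro i _
      exact ((continuous_apply i).continuousOn).mul continuousOn_const
    have := ((bdryA_compact d).image_of_continuousOn hcont').bddAbove
    rwa [Set.image_eq_range] at this
  -- key inequality from optimality of m
  have hle : pairMN d (m ∘ g) n - φ (m ∘ g) ≤ cTA d φ n :=
    le_ciSup hbdd ⟨m ∘ g, hmem⟩
  rw [hsym g m hm] at hle
  have hkey : pairMN d (m ∘ g) n ≤ pairMN d m n := by linarith [hsub, hle]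
  -- compute the difference of pairings
  have hdiff : pairMN d m n - pairMN d (m ∘ g) n
      = ((d : ℝ) + 2) * (α l - α j) * (β l - β j) := by
    unfold pairMN
    rw [← Finset.sum_sub_distrib]
    have hzero : ∀ i ∈ Finset.univ \ ({j, l} : Finset (Fin (d + 2))),
        m i * n i - (m ∘ g) i * n i = 0 := by
      intro i hi
      simp only [Finset.mem_sdiff, Finset.mem_insert, Finset.mem_singleton] at hi
      push_neg at hi
      have : g i = i := Equiv.swap_apply_of_ne_of_ne hi.2.1 hi.2.2
      simp [Function.comp, this]
    have hsplit : (∑ i, (m i * n i - (m ∘ g) i * n i))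
        = ∑ i ∈ ({j, l} : Finset (Fin (d + 2))), (m i * n i - (m ∘ g) i * n i) := by
      rw [← Finset.sum_subset (Finset.subset_univ _)]
      intro i hi hi2
      exact hzero i (Finset.mem_sdiff.mpr ⟨hi, hi2⟩)
    rw [hsplit, Finset.sum_pair hjl]
    have hgj : (m ∘ g) j = m l := by simp [Function.comp, hg, Equiv.swap_apply_left]
    have hgl : (m ∘ g) l = m j := by simp [Function.comp, hg, Equiv.swap_apply_right]
    rw [hgj, hgl, hmval j, hmval l, hnval j, hnval l]
    ring
  by_contra h
  push_neg at h
  nlinarith [mul_pos (mul_pos hd2 (sub_pos.mpr hα)) (sub_pos.mpr h), hkey, hdiff]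

end
end

section
/- With f and φ as in the appendix construction (M, N coprime large integers satisfying M^α ≤ N^{1-α}, α ∈ (0,1), β > 1), every subinterval I ⊆ [0,1] satisfies (1/2)|I|^β ≤ ∫_I f ≤ 3|I|^α. Consequently (1/2)(y-x)^β ≤ φ'(y) - φ'(x) ≤ 3(y-x)^α for all 0 < x < y < 1. -/
open Set MeasureTheory

set_option maxHeartbeats 1000000

noncomputable section

/-- The piecewise constant function of the appendix: `f = M` on `[j/(MN), (j+1)/(MN))` when
`M ∣ j`, and `f = N^{1-β}` otherwise. -/
def stepFun (M N : ℕ) (β : ℝ) : ℝ → ℝ :=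
  fun t => if (M : ℤ) ∣ ⌊t * ((M : ℝ) * N)⌋ then (M : ℝ) else (N : ℝ) ^ (1 - β)

/-- `φ(x) = ∫₀ˣ (x - t) f(t) dt`. -/
def stepPot (M N : ℕ) (β : ℝ) : ℝ → ℝ :=
  fun x => ∫ t in (0:ℝ)..x, (x - t) * stepFun M N β t

section helpers

lemma c_pos {N : ℕ} {β : ℝ} (hN : 2 ≤ N) : (0:ℝ) < (N : ℝ) ^ (1 - β) :=
  Real.rpow_pos_of_pos (by positivity) _

lemma c_le_one {N : ℕ} {β : ℝ} (hN : 2 ≤ N) (hβ : 1 < β) : (N : ℝ) ^ (1 - β) ≤ 1 :=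
  Real.rpow_le_one_of_one_le_of_nonpos (by exact_mod_cast Nat.one_le_of_lt hN) (by linarith)

lemma stepFun_lb {M N : ℕ} {β : ℝ} (hN : 2 ≤ N) (hβ : 1 < β) (hM : 2 ≤ M) (t : ℝ) :
    (N : ℝ) ^ (1 - β) ≤ stepFun M N β t := by
  unfold stepFun
  split
  · exact le_trans (c_le_one hN hβ) (by exact_mod_cast Nat.one_le_of_lt hM)
  · exact le_refl _

lemma stepFun_ub {M N : ℕ} {β : ℝ} (hN : 2 ≤ N) (hβ : 1 < β) (hM : 2 ≤ M) (t : ℝ) :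
    stepFun M N β t ≤ (M : ℝ) := by
  unfold stepFun
  split
  · exact le_refl _
  · exact le_trans (c_le_one hN hβ) (by exact_mod_cast Nat.one_le_of_lt hM)

lemma stepFun_nonneg {M N : ℕ} {β : ℝ} (hN : 2 ≤ N) (hβ : 1 < β) (hM : 2 ≤ M) (t : ℝ) :
    0 ≤ stepFun M N β t :=
  le_trans (c_pos hN).le (stepFun_lb hN hβ hM t)

lemma measurable_stepFun {M N : ℕ} {β : ℝ} : Measurable (stepFun M N β) := by
  unfold stepFun
  refine Measurable.ite ?_ measurable_const measurable_const
  have h1 : Measurable (fun t : ℝ => ⌊t * ((M : ℝ) * N)⌋) :=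
    (measurable_id.mul_const _).floor
  exact h1 (MeasurableSet.of_discrete (s := {n : ℤ | (M : ℤ) ∣ n}))

lemma intervalIntegrable_stepFun {M N : ℕ} {β : ℝ} (hN : 2 ≤ N) (hβ : 1 < β) (hM : 2 ≤ M) (a b : ℝ) :
    IntervalIntegrable (stepFun M N β) volume a b := by
  refine (intervalIntegrable_const (c := (M:ℝ))).mono_fun
    measurable_stepFun.aestronglyMeasurable ?_
  filter_upwards with t
  rw [Real.norm_eq_abs, Real.norm_eq_abs, abs_of_nonneg (stepFun_nonneg hN hβ hM t),
    abs_of_nonneg (by positivity : (0:ℝ) ≤ (M:ℝ))]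
  exact stepFun_ub hN hβ hM t


lemma stepFun_periodic {M N : ℕ} {β : ℝ} (hN : 2 ≤ N) :
    Function.Periodic (stepFun M N β) (1 / N) := by
  intro t
  have hN0 : (N:ℝ) ≠ 0 := by positivity
  unfold stepFun
  have h : (t + 1/N) * ((M:ℝ)*N) = t * ((M:ℝ)*N) + (M:ℤ) := by
    push_cast; field_simp
  rw [h, Int.floor_add_intCast]
  simp only [dvd_add_self_right]

lemma stepFun_eq_M {M N : ℕ} {β : ℝ} (hM : 2 ≤ M) (hN : 2 ≤ N) {t : ℝ}
    (h1 : 0 < t) (h2 : t < 1/((M:ℝ)*N)) : stepFun M N β t = (M:ℝ) := by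
  have hMN0 : (0:ℝ) < (M:ℝ)*N := by positivity
  have hfl : ⌊t * ((M:ℝ)*N)⌋ = 0 := by
    rw [Int.floor_eq_zero_iff]
    constructor
    · positivity
    · calc t * ((M:ℝ)*N) < (1/((M:ℝ)*N)) * ((M:ℝ)*N) := by
            exact mul_lt_mul_of_pos_right h2 hMN0
        _ = 1 := by field_simp
  simp [stepFun, hfl]

lemma stepFun_eq_c {M N : ℕ} {β : ℝ} (hM : 2 ≤ M) (hN : 2 ≤ N) {t : ℝ}
    (h1 : 1/((M:ℝ)*N) < t) (h2 : t < 1/N) : stepFun M N β t = (N:ℝ) ^ (1-β) := by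
  have hMN0 : (0:ℝ) < (M:ℝ)*N := by positivity
  have hN0 : (0:ℝ) < (N:ℝ) := by positivity
  have hlo : (1:ℝ) < t * ((M:ℝ)*N) := by
    calc (1:ℝ) = (1/((M:ℝ)*N)) * ((M:ℝ)*N) := by field_simp
      _ < t * ((M:ℝ)*N) := mul_lt_mul_of_pos_right h1 hMN0
  have hhi : t * ((M:ℝ)*N) < (M:ℝ) := by
    calc t * ((M:ℝ)*N) < (1/(N:ℝ)) * ((M:ℝ)*N) := mul_lt_mul_of_pos_right h2 hMN0
      _ = (M:ℝ) := by field_simp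
  have hj1 : 1 ≤ ⌊t * ((M:ℝ)*N)⌋ := by
    rw [Int.le_floor]; exact_mod_cast hlo.le
  have hj2 : ⌊t * ((M:ℝ)*N)⌋ < (M:ℤ) := by
    rw [Int.floor_lt]; exact_mod_cast hhi
  have hnd : ¬ (M:ℤ) ∣ ⌊t * ((M:ℝ)*N)⌋ := by
    intro hd
    have := Int.le_of_dvd (by omega) hd
    omega
  simp [stepFun, hnd]
lemma ae_ne (d : ℝ) : ∀ᵐ x : ℝ, x ≠ d := by
  have : volume ({d} : Set ℝ) = 0 := measure_singleton d
  rw [ae_iff]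
  simpa using this

lemma stepFun_integral_period {M N : ℕ} {β : ℝ} (hM : 2 ≤ M) (hN : 2 ≤ N) (hβ : 1 < β) :
    ∫ t in (0:ℝ)..(1/N), stepFun M N β t
      = 1/(N:ℝ) + (N:ℝ)^(1-β) * (1/(N:ℝ) - 1/((M:ℝ)*N)) := by
  have hMN0 : (0:ℝ) < (M:ℝ)*N := by positivity
  have hN0 : (0:ℝ) < (N:ℝ) := by positivity
  set d : ℝ := 1/((M:ℝ)*N) with hd
  have hd0 : 0 < d := by positivity
  have hdN : d < 1/N := by
    rw [hd, div_lt_div_iff₀ hMN0 hN0]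
    nlinarith [mul_le_mul_of_nonneg_right (by exact_mod_cast hM : (2:ℝ) ≤ (M:ℝ)) hN0.le]
  have h1 : ∫ t in (0:ℝ)..d, stepFun M N β t = (M:ℝ) * d := by
    have heq : ∫ t in (0:ℝ)..d, stepFun M N β t = ∫ t in (0:ℝ)..d, (M:ℝ) := by
      apply intervalIntegral.integral_congr_ae
      filter_upwards [ae_ne d] with x hx hmem
      rw [Set.uIoc_of_le hd0.le] at hmem
      exact stepFun_eq_M hM hN hmem.1 (lt_of_le_of_ne hmem.2 hx)
    rw [heq, intervalIntegral.integral_const, smul_eq_mul]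
    ring
  have h2 : ∫ t in d..(1/(N:ℝ)), stepFun M N β t = ((N:ℝ)^(1-β)) * (1/(N:ℝ) - d) := by
    have heq : ∫ t in d..(1/(N:ℝ)), stepFun M N β t
        = ∫ t in d..(1/(N:ℝ)), ((N:ℝ)^(1-β)) := by
      apply intervalIntegral.integral_congr_ae
      filter_upwards [ae_ne (1/(N:ℝ))] with x hx hmem
      rw [Set.uIoc_of_le hdN.le] at hmem
      exact stepFun_eq_c hM hN hmem.1 (lt_of_le_of_ne hmem.2 hx)
    rw [heq, intervalIntegral.integral_const, smul_eq_mul]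
    ring
  have hsplit := intervalIntegral.integral_add_adjacent_intervals
    (intervalIntegrable_stepFun hN hβ hM 0 d) (intervalIntegrable_stepFun hN hβ hM d (1/N))
  rw [h1, h2] at hsplit
  rw [← hsplit]
  have hMd : (M:ℝ)*d = 1/N := by rw [hd]; field_simp
  rw [hMd]
lemma intervalIntegrable_linear_mul_stepFun {M N : ℕ} {β : ℝ} (hN : 2 ≤ N) (hβ : 1 < β)
    (hM : 2 ≤ M) (z a b : ℝ) :
    IntervalIntegrable (fun t => (z - t) * stepFun M N β t) volume a b :=
  (intervalIntegrable_stepFun hN hβ hM a b).continuousOn_mul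
    (Continuous.continuousOn (by continuity))

lemma hasDerivAt_stepPot {M N : ℕ} {β : ℝ} (hN : 2 ≤ N) (hβ : 1 < β) (hM : 2 ≤ M) (x : ℝ) :
    HasDerivAt (stepPot M N β) (∫ t in (0:ℝ)..x, stepFun M N β t) x := by
  have hM0 : (0:ℝ) < (M:ℝ) := by positivity
  rw [hasDerivAt_iff_isLittleO]
  have key : ∀ z : ℝ, stepPot M N β z - stepPot M N β x
      - (z - x) * (∫ t in (0:ℝ)..x, stepFun M N β t)
      = ∫ t in x..z, (z - t) * stepFun M N β t := by
    intro z
    have hsplit : (∫ t in (0:ℝ)..x, (z - t) * stepFun M N β t)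
        + ∫ t in x..z, (z - t) * stepFun M N β t = stepPot M N β z :=
      intervalIntegral.integral_add_adjacent_intervals
        (intervalIntegrable_linear_mul_stepFun hN hβ hM z 0 x)
        (intervalIntegrable_linear_mul_stepFun hN hβ hM z x z)
    have hsub : (∫ t in (0:ℝ)..x, (z - t) * stepFun M N β t) - stepPot M N β x
        = (z - x) * ∫ t in (0:ℝ)..x, stepFun M N β t := by
      unfold stepPot
      rw [← intervalIntegral.integral_sub (intervalIntegrable_linear_mul_stepFun hN hβ hM z 0 x)
        (intervalIntegrable_linear_mul_stepFun hN hβ hM x 0 x),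
        ← intervalIntegral.integral_const_mul]
      apply intervalIntegral.integral_congr
      intro t _
      ring
    rw [← hsplit]
    unfold stepPot at hsub ⊢
    linarith [hsub]
  rw [Asymptotics.isLittleO_iff]
  intro ε hε
  filter_upwards [Metric.ball_mem_nhds x (show (0:ℝ) < ε / M by positivity)] with z hz
  rw [Metric.mem_ball, Real.dist_eq] at hz
  have hbound : ‖∫ t in x..z, (z - t) * stepFun M N β t‖ ≤ ((M:ℝ) * |z - x|) * |z - x| := by
    apply intervalIntegral.norm_integral_le_of_norm_le_const
    intro t ht
    have htb : |z - t| ≤ |z - x| := by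
      rw [Set.mem_uIoc] at ht
      rcases ht with ⟨h1,h2⟩|⟨h1,h2⟩
      · rw [abs_of_nonneg (by linarith), abs_of_nonneg (by linarith)]; linarith
      · rw [abs_of_nonpos (by linarith), abs_of_nonpos (by linarith)]; linarith
    rw [Real.norm_eq_abs, abs_mul]
    have h1 : |stepFun M N β t| ≤ (M:ℝ) := by
      rw [abs_of_nonneg (stepFun_nonneg hN hβ hM t)]
      exact stepFun_ub hN hβ hM t
    have h5 : |z - t| * |stepFun M N β t| ≤ |z - x| * (M:ℝ) :=
      mul_le_mul htb h1 (abs_nonneg _) (abs_nonneg _)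
    linarith
  have h2 : (M:ℝ)*|z - x| ≤ ε := by
    have h4 := mul_lt_mul_of_pos_left hz hM0
    have h3 : (M:ℝ)*(ε/M) = ε := by field_simp
    linarith
  rw [smul_eq_mul, key z, Real.norm_eq_abs (z - x)]
  exact le_trans hbound (mul_le_mul_of_nonneg_right h2 (abs_nonneg _))

end helpers

theorem stepFun_bounds_main (M N : ℕ) (hM : 2 ≤ M) (hN : 2 ≤ N)
    (α β : ℝ) (hα : 0 < α) (hα1 : α < 1) (hβ : 1 < β)
    (hMN : (M : ℝ) ^ α ≤ (N : ℝ) ^ (1 - α)) :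
    ∀ x y : ℝ, 0 ≤ x → x ≤ y → y ≤ 1 →
      (1/2) * (y - x) ^ β ≤ ∫ t in x..y, stepFun M N β t ∧
      ∫ t in x..y, stepFun M N β t ≤ 3 * (y - x) ^ α := by
  intro x y hx hxy hy
  have hN0 : (0:ℝ) < (N:ℝ) := by positivity
  have hM0 : (0:ℝ) < (M:ℝ) := by positivity
  have hM2 : (2:ℝ) ≤ (M:ℝ) := by exact_mod_cast hM
  have hN2 : (2:ℝ) ≤ (N:ℝ) := by exact_mod_cast hN
  have hMN0 : (0:ℝ) < (M:ℝ)*N := by positivity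
  set c : ℝ := (N:ℝ)^(1-β) with hc
  have hc0 : 0 < c := c_pos hN
  have hc1 : c ≤ 1 := c_le_one hN hβ
  set L : ℝ := y - x with hL
  have hL0 : 0 ≤ L := by simp [hL]; linarith
  have hL1 : L ≤ 1 := by simp [hL]; linarith
  have hint : ∀ a b : ℝ, IntervalIntegrable (stepFun M N β) volume a b :=
    intervalIntegrable_stepFun hN hβ hM
  -- per-period integral over any starting point
  have hperC : ∀ z : ℝ, ∫ t in z..z+(1/N:ℝ), stepFun M N β t
      = 1/(N:ℝ) + c * (1/(N:ℝ) - 1/((M:ℝ)*N)) := by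
    intro z
    have := (stepFun_periodic (M:=M) (β:=β) hN).intervalIntegral_add_eq z 0
    rw [this, zero_add, stepFun_integral_period hM hN hβ]
  have hdinv : 1/((M:ℝ)*N) ≤ 1/(N:ℝ) := by
    rw [div_le_div_iff₀ hMN0 hN0]
    nlinarith
  have hCape : (1:ℝ)/N ≤ 1/(N:ℝ) + c * (1/(N:ℝ) - 1/((M:ℝ)*N)) := by nlinarith
  -- generic: L ≤ L^α and L^β ≤ L for 0 < L ≤ 1
  have hLα : L ≤ L ^ α := by
    rcases eq_or_lt_of_le hL0 with h0 | h0
    · rw [← h0, Real.zero_rpow hα.ne']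
    · calc L = L ^ (1:ℝ) := (Real.rpow_one L).symm
        _ ≤ L ^ α := Real.rpow_le_rpow_of_exponent_ge h0 hL1 hα1.le
  have hLβ : L ^ β ≤ L := by
    rcases eq_or_lt_of_le hL0 with h0 | h0
    · rw [← h0, Real.zero_rpow (by linarith : β ≠ 0)]
    · calc L ^ β ≤ L ^ (1:ℝ) := Real.rpow_le_rpow_of_exponent_ge h0 hL1 hβ.le
        _ = L := Real.rpow_one L
  have hTinv : ∀ r : ℝ, 0 ≤ r → r * N ≤ 1 → r ≤ 1/(N:ℝ) := by
    intro r _ h; rw [le_div_iff₀ hN0]; exact h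
  constructor
  · -- LOWER BOUND
    rcases le_or_gt (L * N) 1 with hLN | hLN
    · -- small interval: use f ≥ c
      have hlow : c * L ≤ ∫ t in x..y, stepFun M N β t := by
        have h1 : ∫ t in x..y, (fun _ => c) t ≤ ∫ t in x..y, stepFun M N β t :=
          intervalIntegral.integral_mono_on hxy intervalIntegrable_const (hint x y)
            (fun t _ => stepFun_lb hN hβ hM t)
        rwa [intervalIntegral.integral_const, smul_eq_mul, mul_comm] at h1
      refine le_trans ?_ hlow
      rcases eq_or_lt_of_le hL0 with h0 | h0
      · rw [← h0, Real.zero_rpow (by linarith : β ≠ 0)]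
        simp
      · have hLinv : L ≤ 1/(N:ℝ) := hTinv L hL0 hLN
        have hceq : c = ((N:ℝ)^(β-1))⁻¹ := by
          rw [hc, ← neg_sub β 1, Real.rpow_neg hN0.le]
        have hpow : L ^ (β-1) ≤ c := by
          calc L ^ (β-1) ≤ (1/(N:ℝ)) ^ (β-1) :=
                Real.rpow_le_rpow hL0 hLinv (by linarith)
            _ = c := by
                rw [one_div, Real.inv_rpow hN0.le, hceq]
        have hLβeq : L ^ β = L ^ (β-1) * L := by
          rw [Real.rpow_sub h0, Real.rpow_one]; field_simp
        have h1 : L ^ β ≤ c * L := by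
          rw [hLβeq]; exact mul_le_mul_of_nonneg_right hpow hL0
        nlinarith [Real.rpow_nonneg hL0 β]
    · -- at least one full period
      set k : ℤ := ⌊L*N⌋ with hk
      have hk1 : (1:ℤ) ≤ k := by
        rw [hk, Int.le_floor]; exact_mod_cast hLN.le
      have hkle : (k:ℝ) ≤ L*N := Int.floor_le _
      have hklt : L*N < (k:ℝ) + 1 := Int.lt_floor_add_one _
      have hNN : (N:ℝ)*(1/N) = 1 := by field_simp
      have hkN : (k:ℝ) * (1/N) ≤ L := by
        calc (k:ℝ) * (1/N) ≤ (L*N) * (1/N) := by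
              apply mul_le_mul_of_nonneg_right hkle; positivity
          _ = L * ((N:ℝ)*(1/N)) := by ring
          _ = L := by rw [hNN, mul_one]
      have hT : x + (k:ℝ) * (1/N) ≤ y := by
        have : L = y - x := hL
        linarith
      have hzs := (stepFun_periodic (M:=M) (β:=β) hN).intervalIntegral_add_zsmul_eq k x hint
      rw [hperC x, zsmul_eq_mul, zsmul_eq_mul] at hzs
      have hnn : 0 ≤ ∫ t in (x+(k:ℝ)*(1/N))..y, stepFun M N β t :=
        intervalIntegral.integral_nonneg hT (fun t _ => stepFun_nonneg hN hβ hM t)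
      have hsplit := intervalIntegral.integral_add_adjacent_intervals
        (hint x (x+(k:ℝ)*(1/N))) (hint (x+(k:ℝ)*(1/N)) y)
      have hge : (k:ℝ) * (1/(N:ℝ) + c * (1/(N:ℝ) - 1/((M:ℝ)*N))) ≤ ∫ t in x..y, stepFun M N β t := by
        rw [← hsplit, ← hzs]
        linarith
      have hk0 : (0:ℝ) ≤ (k:ℝ) := by exact_mod_cast (by omega : (0:ℤ) ≤ k)
      have hgeN : (k:ℝ) * (1/N) ≤ ∫ t in x..y, stepFun M N β t :=
        le_trans (mul_le_mul_of_nonneg_left hCape hk0) hge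
      have hkhalf : L / 2 ≤ (k:ℝ) * (1/N) := by
        have hk1' : (1:ℝ) ≤ (k:ℝ) := by exact_mod_cast hk1
        have h2k : L*N ≤ 2*(k:ℝ) := by
          rcases le_or_gt (L*N) 2 with h2 | h2 <;> linarith
        have h3 := mul_le_mul_of_nonneg_right h2k (by positivity : (0:ℝ) ≤ 1/N)
        calc L/2 = (L*((N:ℝ)*(1/N)))/2 := by rw [hNN, mul_one]
          _ = ((L*N)*(1/N))/2 := by ring
          _ ≤ (2*(k:ℝ)*(1/N))/2 := by linarith
          _ = (k:ℝ)*(1/N) := by ring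
      have hfin : (1/2) * L ^ β ≤ L / 2 := by nlinarith [hLβ, Real.rpow_nonneg hL0 β]
      linarith
  · -- UPPER BOUND
    set g : ℝ → ℝ := fun t => stepFun M N β t - c with hg
    have hgint : ∀ a b : ℝ, IntervalIntegrable g volume a b := fun a b =>
      (hint a b).sub intervalIntegrable_const
    have hgper : Function.Periodic g (1/N) := by
      intro t
      simp only [hg]
      rw [stepFun_periodic (M:=M) (β:=β) hN t]
    have hg0 : ∀ t, 0 ≤ g t := fun t => sub_nonneg.2 (stepFun_lb hN hβ hM t)
    have hgM : ∀ t, g t ≤ (M:ℝ) := fun t => by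
      have := stepFun_ub hN hβ hM t
      simp only [hg]
      linarith
    have hgC : ∀ z : ℝ, ∫ t in z..z+(1/N:ℝ), g t = 1/(N:ℝ) - c * (1/((M:ℝ)*N)) := by
      intro z
      simp only [hg]
      rw [intervalIntegral.integral_sub (hint z _) intervalIntegrable_const,
        hperC z, intervalIntegral.integral_const, smul_eq_mul]
      ring
    have hFG : ∫ t in x..y, stepFun M N β t = (∫ t in x..y, g t) + c * L := by
      have : ∫ t in x..y, g t
          = (∫ t in x..y, stepFun M N β t) - ∫ t in x..y, (fun _ => c) t := by
        simp only [hg]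
        exact intervalIntegral.integral_sub (hint x y) intervalIntegrable_const
      rw [this, intervalIntegral.integral_const, smul_eq_mul]
      have hLyx : y - x = L := by rw [hL]
      rw [hLyx]
      ring
    have hcL : c * L ≤ L ^ α := le_trans (by nlinarith : c * L ≤ L) hLα
    suffices hGle : ∫ t in x..y, g t ≤ 2 * L ^ α by
      rw [hFG]
      linarith
    rcases eq_or_lt_of_le hL0 with h0 | h0
    · have hyx : y = x := by rw [hL] at h0; linarith
      rw [hyx, intervalIntegral.integral_same]
      positivity
    rcases le_or_gt (L * N) 1 with hLN | hLN
    · -- short interval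
      rcases le_or_gt (L * ((M:ℝ)*N)) 2 with hL2 | hL2
      · -- very short: g ≤ M pointwise
        have hup : ∫ t in x..y, g t ≤ (M:ℝ) * L := by
          have h1 : ∫ t in x..y, g t ≤ ∫ t in x..y, (fun _ => (M:ℝ)) t :=
            intervalIntegral.integral_mono_on hxy (hgint x y) intervalIntegrable_const
              (fun t _ => hgM t)
          rwa [intervalIntegral.integral_const, smul_eq_mul, mul_comm (y-x), ← hL] at h1
        refine le_trans hup ?_
        have hMle : (M:ℝ) ≤ ((M:ℝ)*N)^(1-α) := by
          calc (M:ℝ) = (M:ℝ)^α * (M:ℝ)^(1-α) := by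
                rw [← Real.rpow_add hM0, show α+(1-α) = 1 by ring, Real.rpow_one]
            _ ≤ (N:ℝ)^(1-α) * (M:ℝ)^(1-α) :=
              mul_le_mul_of_nonneg_right hMN (Real.rpow_nonneg hM0.le _)
            _ = ((N:ℝ)*M)^(1-α) := (Real.mul_rpow hN0.le hM0.le).symm
            _ = ((M:ℝ)*N)^(1-α) := by rw [mul_comm]
        have hLsplit : L = L^(1-α) * L^α := by
          rw [← Real.rpow_add h0, show (1-α)+α = 1 by ring, Real.rpow_one]
        calc (M:ℝ) * L ≤ ((M:ℝ)*N)^(1-α) * L := mul_le_mul_of_nonneg_right hMle hL0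
          _ = ((M:ℝ)*N)^(1-α) * (L^(1-α) * L^α) := by rw [← hLsplit]
          _ = (((M:ℝ)*N) * L)^(1-α) * L^α := by
              rw [Real.mul_rpow hMN0.le hL0]; ring
          _ ≤ (2:ℝ)^(1-α) * L^α := by
              apply mul_le_mul_of_nonneg_right _ (Real.rpow_nonneg hL0 α)
              apply Real.rpow_le_rpow (by positivity) (by linarith) (by linarith)
          _ ≤ 2 * L^α := by
              apply mul_le_mul_of_nonneg_right _ (Real.rpow_nonneg hL0 α)
              calc (2:ℝ)^(1-α) ≤ (2:ℝ)^(1:ℝ) :=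
                  Real.rpow_le_rpow_of_exponent_le (by norm_num) (by linarith)
                _ = 2 := Real.rpow_one 2
      · -- medium: one period suffices
        have hyT : y ≤ x + 1/N := by
          have h1 : L ≤ 1/(N:ℝ) := hTinv L hL0 hLN
          rw [hL] at h1; linarith
        have hnn2 : 0 ≤ ∫ t in y..(x+1/N), g t :=
          intervalIntegral.integral_nonneg hyT (fun t _ => hg0 t)
        have hsplit2 := intervalIntegral.integral_add_adjacent_intervals
          (hgint x y) (hgint y (x+1/N))
        have hup : ∫ t in x..y, g t ≤ 1/(N:ℝ) := by
          have hpos : 0 ≤ c * (1/((M:ℝ)*N)) := by positivity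
          have h5 := hgC x
          linarith
        refine le_trans hup ?_
        have hMNa : ((M:ℝ)*N)^α ≤ (N:ℝ) := by
          calc ((M:ℝ)*N)^α = (M:ℝ)^α * (N:ℝ)^α := Real.mul_rpow hM0.le hN0.le
            _ ≤ (N:ℝ)^(1-α) * (N:ℝ)^α :=
                mul_le_mul_of_nonneg_right hMN (Real.rpow_nonneg hN0.le _)
            _ = (N:ℝ)^((1-α)+α) := (Real.rpow_add hN0 _ _).symm
            _ = (N:ℝ) := by norm_num
        have hLge : 1/((M:ℝ)*N) ≤ L := by
          rw [div_le_iff₀ hMN0]; nlinarith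
        have h1 : (1/((M:ℝ)*N))^α ≤ L^α := Real.rpow_le_rpow (by positivity) hLge hα.le
        have h2 : (1/((M:ℝ)*N))^α = ((((M:ℝ)*N))^α)⁻¹ := by
          rw [one_div, Real.inv_rpow hMN0.le]
        have h3 : 1/(N:ℝ) ≤ ((((M:ℝ)*N))^α)⁻¹ := by
          rw [← one_div]
          exact one_div_le_one_div_of_le (Real.rpow_pos_of_pos hMN0 α) hMNa
        calc 1/(N:ℝ) ≤ (((M:ℝ)*N)^α)⁻¹ := h3
          _ = (1/((M:ℝ)*N))^α := h2.symm
          _ ≤ L^α := h1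
          _ ≤ 2*L^α := by nlinarith [Real.rpow_nonneg hL0 α]
    · -- long: k+1 periods
      set k : ℤ := ⌊L*N⌋ with hk
      have hk1 : (1:ℤ) ≤ k := by
        rw [hk, Int.le_floor]; exact_mod_cast hLN.le
      have hkle : (k:ℝ) ≤ L*N := Int.floor_le _
      have hklt : L*N < (k:ℝ) + 1 := Int.lt_floor_add_one _
      have hk1' : (1:ℝ) ≤ (k:ℝ) := by exact_mod_cast hk1
      have hNN : (N:ℝ)*(1/N) = 1 := by field_simp
      have hLeq : L = (L*N)*(1/N) := by
        rw [mul_assoc, hNN, mul_one]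
      have hyT : y ≤ x + ((k:ℝ)+1)*(1/N) := by
        have h4 := mul_lt_mul_of_pos_right hklt (by positivity : (0:ℝ) < 1/N)
        have h5 : L < ((k:ℝ)+1)*(1/N) := by rw [hLeq]; exact h4
        rw [hL] at h5; linarith
      have hzs := hgper.intervalIntegral_add_zsmul_eq (k+1) x hgint
      rw [hgC x] at hzs
      have hcast : (((k+1:ℤ)):ℝ) = (k:ℝ)+1 := by push_cast; ring
      rw [zsmul_eq_mul, zsmul_eq_mul, hcast] at hzs
      have hnn2 : 0 ≤ ∫ t in y..(x+((k:ℝ)+1)*(1/N)), g t :=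
        intervalIntegral.integral_nonneg hyT (fun t _ => hg0 t)
      have hsplit2 := intervalIntegral.integral_add_adjacent_intervals
        (hgint x y) (hgint y (x+((k:ℝ)+1)*(1/N)))
      have hup : ∫ t in x..y, g t ≤ ((k:ℝ)+1)*(1/(N:ℝ) - c*(1/((M:ℝ)*N))) := by
        rw [← hzs]
        linarith
      have hC'le : 1/(N:ℝ) - c*(1/((M:ℝ)*N)) ≤ 1/(N:ℝ) := by
        have hpos : 0 ≤ c * (1/((M:ℝ)*N)) := by positivity
        linarith
      have h6 : ((k:ℝ)+1)*(1/(N:ℝ) - c*(1/((M:ℝ)*N))) ≤ ((k:ℝ)+1)*(1/N) :=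
        mul_le_mul_of_nonneg_left hC'le (by linarith)
      have hk1N : ((k:ℝ)+1)*(1/N) ≤ 2*L := by
        have h1 : (k:ℝ)+1 ≤ 2*(L*N) := by nlinarith
        calc ((k:ℝ)+1)*(1/N) ≤ (2*(L*N))*(1/N) :=
            mul_le_mul_of_nonneg_right h1 (by positivity)
          _ = 2*(L*((N:ℝ)*(1/N))) := by ring
          _ = 2*L := by rw [hNN, mul_one]
      have : 2*L ≤ 2*L^α := by linarith
      linarith


/-- The two-sided bounds of the appendix: `(1/2)|I|^β ≤ ∫_I f ≤ 3|I|^α` for every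
subinterval `I ⊆ [0,1]`, and consequently `(1/2)(y-x)^β ≤ φ'(y) - φ'(x) ≤ 3(y-x)^α`. -/
theorem stepFun_interval_bounds (M N : ℕ) (hM : 2 ≤ M) (hN : 2 ≤ N)
    (hcop : Nat.Coprime M N) (α β : ℝ) (hα : 0 < α) (hα1 : α < 1) (hβ : 1 < β)
    (hMN : (M : ℝ) ^ α ≤ (N : ℝ) ^ (1 - α)) :
    (∀ x y : ℝ, 0 ≤ x → x ≤ y → y ≤ 1 →
      (1/2) * (y - x) ^ β ≤ ∫ t in x..y, stepFun M N β t ∧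
      ∫ t in x..y, stepFun M N β t ≤ 3 * (y - x) ^ α) ∧
    (∀ x y : ℝ, 0 < x → x < y → y < 1 →
      (1/2) * (y - x) ^ β ≤ deriv (stepPot M N β) y - deriv (stepPot M N β) x ∧
      deriv (stepPot M N β) y - deriv (stepPot M N β) x ≤ 3 * (y - x) ^ α) := by
  have main := stepFun_bounds_main M N hM hN α β hα hα1 hβ hMN
  refine ⟨main, ?_⟩
  intro x y hx hxy hy
  have hdx := (hasDerivAt_stepPot hN hβ hM x).deriv
  have hdy := (hasDerivAt_stepPot hN hβ hM y).deriv
  rw [hdx, hdy]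
  have hsplit := intervalIntegral.integral_add_adjacent_intervals
    (intervalIntegrable_stepFun hN hβ hM 0 x) (intervalIntegrable_stepFun hN hβ hM x y)
  have heq : (∫ t in (0:ℝ)..y, stepFun M N β t) - ∫ t in (0:ℝ)..x, stepFun M N β t
      = ∫ t in x..y, stepFun M N β t := by linarith
  rw [heq]
  exact main x y hx.le hxy.le hy.le

end
end
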